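/- Strain error estimate, case h₀ > 1: for every p ∈ [1,∞], the relative strain error Err_p = ‖u^{scb}-u^a‖_{ℓ^p}/‖u^a‖_{ℓ^p} satisfies Err_p = C_p + O(e^{-α}) as α → ∞, where C_p = (|1-1/h₀|^p + (h₀-1)(1/h₀)^p)^{1/p} for p < ∞ (C_∞ = max(1-1/h₀, 1/h₀)), and the constant C_p satisfies 1/2 ≤ C_p ≤ 2. -/

import Mathlib

noncomputable def morseR0 (α : ℝ) : ℝ :=
  1 + (1 / α) * Real.log ((1 + 2 * Real.exp (-α)) / (1 + 2 * Real.exp (-2 * α)))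

noncomputable def morse (α φ₀ : ℝ) (r : ℝ) : ℝ :=
  Real.exp (-2 * α * (r - morseR0 α)) - 2 * Real.exp (-α * (r - morseR0 α)) - φ₀

/-!
Normalising by `K = φ'(2) / (a + b (1 + λ))`, where `a = φ''(1)` and `b = φ''(2)`, the atomistic
strain becomes the geometric sequence `(λ ^ ℓ)` and the error `u^scb - u^a` becomes
`t • 1_[0,h₀) - (λ ^ ℓ)` with `t = (a + b (1 + λ)) / (h₀ a + (4 h₀ - 2) b)`; both relative errors
are ratios of norms in `ℓ^p`, `1 ≤ p ≤ ∞`, so `K` cancels. For the Morse potential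
`|b| ≤ e^{-α} a`, which through `b λ² + (a + 2 b) λ + b = 0` forces `λ = O(e^{-α})`, and also
`h₀ t = 1 + O(e^{-α})`. Hence the error is `O(e^{-α})`-close in `ℓ^p` to the limit profile
`h₀⁻¹ • 1_[0,h₀) - e₀`, whose norm is `C_p`, while `1 ≤ ‖(λ ^ ℓ)‖ ≤ 1 / (1 - λ)`; the triangle
inequality then bounds the relative error uniformly in `p`. The limit profile has the coordinate
`1/h₀ - 1` and is a difference of two vectors of norm at most `1`, whence `1/2 ≤ C_p ≤ 2`.
-/

open scoped lp ENNReal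

open Real

section Morse

variable (α φ₀ : ℝ)

theorem morse_eq_sq_sub : morse α φ₀ = fun r =>
    exp (-α * (r - morseR0 α)) ^ 2 - 2 * exp (-α * (r - morseR0 α)) - φ₀ := by
  funext r
  rw [morse, ← exp_nat_mul]
  push_cast
  ring_nf

theorem hasDerivAt_exp_morse (r : ℝ) :
    HasDerivAt (fun r => exp (-α * (r - morseR0 α))) (-α * exp (-α * (r - morseR0 α))) r := by
  have := (((hasDerivAt_id r).sub_const (morseR0 α)).const_mul (-α)).exp
  simpa [mul_comm] using this

theorem deriv_morse : deriv (morse α φ₀) = fun r =>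
    2 * α * (exp (-α * (r - morseR0 α)) - exp (-α * (r - morseR0 α)) ^ 2) := by
  funext r
  rw [morse_eq_sq_sub]
  have := hasDerivAt_exp_morse α r
  refine ((this.pow 2).sub (this.const_mul 2) |>.sub_const φ₀).deriv.trans ?_
  ring

theorem deriv_deriv_morse (r : ℝ) : deriv (deriv (morse α φ₀)) r =
    2 * α ^ 2 * (2 * exp (-α * (r - morseR0 α)) ^ 2 - exp (-α * (r - morseR0 α))) := by
  rw [deriv_morse]
  have := hasDerivAt_exp_morse α r
  refine ((this.sub (this.pow 2)).const_mul (2 * α)).deriv.trans ?_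
  ring

theorem exp_morse_one (hα : α ≠ 0) :
    exp (-α * (1 - morseR0 α)) = (1 + 2 * exp (-α)) / (1 + 2 * exp (-α) ^ 2) := by
  have hpos : 0 < (1 + 2 * exp (-α)) / (1 + 2 * exp (-2 * α)) := by positivity
  rw [morseR0, show -α * (1 - (1 + 1 / α * log ((1 + 2 * exp (-α)) / (1 + 2 * exp (-2 * α)))))
      = log ((1 + 2 * exp (-α)) / (1 + 2 * exp (-2 * α))) by field_simp; ring, exp_log hpos,
    ← exp_nat_mul]
  push_cast
  ring_nf

theorem exp_morse_two :
    exp (-α * (2 - morseR0 α)) = exp (-α * (1 - morseR0 α)) * exp (-α) := by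
  rw [← exp_add]; ring_nf

theorem morse_coeff_bounds (hα : 0 < α) :
    0 < deriv (deriv (morse α φ₀)) 1 ∧ 0 < deriv (morse α φ₀) 2 ∧
      |deriv (deriv (morse α φ₀)) 2| ≤ exp (-α) * deriv (deriv (morse α φ₀)) 1 := by
  rw [deriv_deriv_morse, deriv_deriv_morse, deriv_morse]
  beta_reduce
  rw [exp_morse_two]
  -- `φ''(1) = 2α²s(2s - 1)`, `φ'(2) = 2αsq(1 - sq)` and `φ''(2) = 2α²sq(2sq - 1)`
  set q := exp (-α)
  set s := exp (-α * (1 - morseR0 α))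
  have hq0 : 0 < q := exp_pos _
  have hq1 : q < 1 := exp_lt_one_iff.2 (by linarith)
  have hs : s = (1 + 2 * q) / (1 + 2 * q ^ 2) := exp_morse_one α hα.ne'
  have hs1 : 1 ≤ s := by rw [hs, le_div_iff₀ (by positivity)]; nlinarith
  have hsq : s * q < 1 := by rw [hs, div_mul_eq_mul_div, div_lt_one (by positivity)]; nlinarith
  have hsq0 : 0 < s * q := by positivity
  have hα2 : 0 < 2 * α ^ 2 := by positivity
  have ha : 2 * α ^ 2 * s ≤ 2 * α ^ 2 * (2 * s ^ 2 - s) :=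
    mul_le_mul_of_nonneg_left (by nlinarith) hα2.le
  refine ⟨by nlinarith, ?_, ?_⟩
  · have : 0 < 2 * α * (s * q) * (1 - s * q) := by have := sub_pos.2 hsq; positivity
    linarith
  · have hb : |2 * s * q - 1| ≤ 1 := abs_le.2 ⟨by linarith, by linarith⟩
    calc |2 * α ^ 2 * (2 * (s * q) ^ 2 - s * q)| = 2 * α ^ 2 * (s * q) * |2 * s * q - 1| := by
          rw [show 2 * α ^ 2 * (2 * (s * q) ^ 2 - s * q)
              = 2 * α ^ 2 * (s * q) * (2 * s * q - 1) by ring, abs_mul, abs_of_pos (by positivity)]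
      _ ≤ 2 * α ^ 2 * (s * q) * 1 := by gcongr
      _ ≤ q * (2 * α ^ 2 * (2 * s ^ 2 - s)) := by nlinarith

end Morse

section Coefficients

variable {a b q lam : ℝ}

theorem quadratic_root_le_four_mul (ha : 0 < a) (hb : |b| ≤ q * a) (hq : q ≤ 1 / 8)
    (hlam0 : 0 < lam) (hlam1 : lam < 1) (heq : b * lam ^ 2 + (a + 2 * b) * lam + b = 0) :
    lam ≤ 4 * q := by
  obtain ⟨hb₁, hb₂⟩ := abs_le.1 hb
  have hq0 : 0 ≤ q := nonneg_of_mul_nonneg_left ((abs_nonneg b).trans hb) ha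
  have hlin : lam * (a + 2 * b) ≤ 2 * q * a := by
    have hrw : lam * (a + 2 * b) = -b * (1 + lam ^ 2) := by linear_combination heq
    have hsq : lam ^ 2 ≤ 1 := by nlinarith
    nlinarith [mul_le_mul_of_nonneg_right (neg_le.1 hb₁) (by positivity : (0 : ℝ) ≤ 1 + lam ^ 2)]
  have hcoef : 3 / 4 * a ≤ a + 2 * b := by nlinarith
  nlinarith

theorem atomistic_denominator_pos (ha : 0 < a) (hb : |b| ≤ q * a) (hq : q ≤ 1 / 8)
    (hlam0 : 0 ≤ lam) (hlam1 : lam ≤ 1) : 0 < a + b * (1 + lam) := by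
  obtain ⟨hb₁, -⟩ := abs_le.1 hb
  have hqa : 0 ≤ q * a := (abs_nonneg b).trans hb
  nlinarith [mul_le_mul_of_nonneg_right hb₁ (by linarith : (0 : ℝ) ≤ 1 + lam),
    mul_le_mul_of_nonneg_right hq ha.le]

theorem half_le_scb_denominator {H : ℝ} (hH : 1 ≤ H) (ha : 0 < a) (hb : |b| ≤ q * a)
    (hq : q ≤ 1 / 8) : H * a / 2 ≤ H * a + (4 * H - 2) * b := by
  obtain ⟨hb₁, -⟩ := abs_le.1 hb
  nlinarith [mul_le_mul_of_nonneg_left hb₁ (by linarith : (0 : ℝ) ≤ 4 * H - 2),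
    mul_le_mul_of_nonneg_right hq (by nlinarith : (0 : ℝ) ≤ (4 * H - 2) * a)]

theorem mul_abs_denominator_ratio_sub_inv_le {H : ℝ} (hH : 1 ≤ H) (ha : 0 < a) (hb : |b| ≤ q * a)
    (hq : q ≤ 1 / 8) (hlam0 : 0 ≤ lam) (hlam1 : lam ≤ 1) :
    H * |(a + b * (1 + lam)) / (H * a + (4 * H - 2) * b) - H⁻¹| ≤ 6 * q := by
  have hE := half_le_scb_denominator hH ha hb hq
  have hE0 : 0 < H * a + (4 * H - 2) * b := lt_of_lt_of_le (by positivity) hE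
  have hkey : H * ((a + b * (1 + lam)) / (H * a + (4 * H - 2) * b) - H⁻¹)
      = b * (H * (1 + lam) - (4 * H - 2)) / (H * a + (4 * H - 2) * b) := by
    have hH0 : H ≠ 0 := by positivity
    rw [mul_sub, ← mul_div_assoc, mul_inv_cancel₀ hH0, div_sub_one hE0.ne']
    ring
  have hfac : |H * (1 + lam) - (4 * H - 2)| ≤ 3 * H := abs_le.2 ⟨by nlinarith, by nlinarith⟩
  rw [← abs_of_pos (by linarith : 0 < H), ← abs_mul, abs_of_pos (by linarith : 0 < H), hkey,
    abs_div, abs_mul, abs_of_pos hE0, div_le_iff₀ hE0]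
  calc |b| * |H * (1 + lam) - (4 * H - 2)| ≤ q * a * (3 * H) :=
        mul_le_mul hb hfac (abs_nonneg _) ((abs_nonneg _).trans hb)
    _ ≤ 6 * q * (H * a + (4 * H - 2) * b) := by
        have hq0 : 0 ≤ q := nonneg_of_mul_nonneg_left ((abs_nonneg b).trans hb) ha
        nlinarith

end Coefficients

section LpFacts

variable {α : Type*} {E : α → Type*} [∀ i, NormedAddCommGroup (E i)] {p : ℝ≥0∞} [Fact (1 ≤ p)]

theorem Memℓp.of_summable_norm {f : ∀ i, E i} (hf : Summable fun i => ‖f i‖) : Memℓp f p :=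
  (memℓp_gen (p := 1) (by simpa using hf)).of_exponent_ge Fact.out

theorem lp.norm_le_tsum_norm [DecidableEq α] (f : lp E p) (hf : Summable fun i => ‖f i‖) :
    ‖f‖ ≤ ∑' i, ‖f i‖ := by
  have hp : 0 < p := zero_lt_one.trans_le Fact.out
  rcases eq_or_ne p ⊤ with rfl | hp_top
  · exact lp.norm_le_of_forall_le (tsum_nonneg fun _ => norm_nonneg _)
      fun i => hf.le_tsum i fun j _ => norm_nonneg _
  · calc ‖f‖ = ‖∑' i, lp.single p i (f i)‖ := by rw [(lp.hasSum_single hp_top f).tsum_eq]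
      _ ≤ ∑' i, ‖lp.single p i (f i)‖ :=
        norm_tsum_le_tsum_norm (by simpa only [lp.norm_single hp] using hf)
      _ = ∑' i, ‖f i‖ := by simp only [lp.norm_single hp]

end LpFacts

theorem lp.norm_ofReal_eq {p : ℝ} (hp : 0 < p) (f : ℓ^(ENNReal.ofReal p)(ℕ, ℝ)) :
    ‖f‖ = (∑' ℓ, |f ℓ| ^ p) ^ (1 / p) := by
  have hp' : (ENNReal.ofReal p).toReal = p := ENNReal.toReal_ofReal hp.le
  simp only [lp.norm_eq_tsum_rpow (hp'.symm ▸ hp), hp', Real.norm_eq_abs]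

theorem rpow_tsum_abs_rpow_eq_abs_mul_norm {p : ℝ} (hp : 0 < p) (K : ℝ)
    (f : ℓ^(ENNReal.ofReal p)(ℕ, ℝ)) {g : ℕ → ℝ} (hg : ∀ ℓ, g ℓ = K * f ℓ) :
    (∑' ℓ, |g ℓ| ^ p) ^ (1 / p) = |K| * ‖f‖ := by
  rw [← Real.norm_eq_abs, ← lp.norm_const_smul (ENNReal.ofReal_pos.2 hp).ne', lp.norm_ofReal_eq hp]
  simp only [hg, lp.coeFn_smul, Pi.smul_apply, smul_eq_mul]

theorem iSup_abs_eq_abs_mul_norm (K : ℝ) (f : ℓ^∞(ℕ, ℝ)) {g : ℕ → ℝ}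
    (hg : ∀ ℓ, g ℓ = K * f ℓ) : ⨆ ℓ, |g ℓ| = |K| * ‖f‖ := by
  rw [← Real.norm_eq_abs, ← lp.norm_const_smul ENNReal.top_ne_zero, lp.norm_eq_ciSup]
  simp only [hg, lp.coeFn_smul, Pi.smul_apply, smul_eq_mul, Real.norm_eq_abs]

theorem abs_norm_div_norm_sub_norm_le {E : Type*} [SeminormedAddCommGroup E] {x y u : E}
    (hu : 1 ≤ ‖u‖) : |‖x‖ / ‖u‖ - ‖y‖| ≤ ‖x - y‖ + ‖y‖ * (1 - ‖u‖⁻¹) := by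
  have hu0 : 0 < ‖u‖ := one_pos.trans_le hu
  have hinv : ‖u‖⁻¹ ≤ 1 := inv_le_one_of_one_le₀ hu
  calc |‖x‖ / ‖u‖ - ‖y‖| = |(‖x‖ - ‖y‖) * ‖u‖⁻¹ - ‖y‖ * (1 - ‖u‖⁻¹)| := by ring_nf
    _ ≤ |‖x‖ - ‖y‖| * ‖u‖⁻¹ + ‖y‖ * (1 - ‖u‖⁻¹) := by
      have hy : 0 ≤ ‖y‖ * (1 - ‖u‖⁻¹) := mul_nonneg (norm_nonneg y) (sub_nonneg.2 hinv)
      refine (abs_sub _ _).trans ?_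
      rw [abs_mul, abs_of_pos (inv_pos.2 hu0), abs_of_nonneg hy]
    _ ≤ ‖x - y‖ + ‖y‖ * (1 - ‖u‖⁻¹) := by
      gcongr
      calc |‖x‖ - ‖y‖| * ‖u‖⁻¹ ≤ |‖x‖ - ‖y‖| := mul_le_of_le_one_right (abs_nonneg _) hinv
        _ ≤ ‖x - y‖ := abs_norm_sub_norm_le x y

section Profiles

variable (p : ℝ≥0∞)

noncomputable def rangeIndicator (h : ℕ) : ℓ^p(ℕ, ℝ) := ∑ i ∈ Finset.range h, lp.single p i 1

-- The `α → ∞` limit of the normalised error `(u^scb - u^a) / u^a_0`.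
noncomputable def limitProfile (h : ℕ) : ℓ^p(ℕ, ℝ) :=
  (h : ℝ)⁻¹ • rangeIndicator p h - lp.single p 0 1

noncomputable def geomSeq [Fact (1 ≤ p)] (r : ℝ) (hr : |r| < 1) : ℓ^p(ℕ, ℝ) :=
  ⟨fun ℓ => r ^ ℓ, Memℓp.of_summable_norm <| by
    simpa using summable_geometric_of_lt_one (abs_nonneg r) hr⟩

variable {p}

theorem rangeIndicator_apply (h ℓ : ℕ) : rangeIndicator p h ℓ = if ℓ < h then 1 else 0 := by
  rw [rangeIndicator, lp.coeFn_sum, Finset.sum_apply]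
  simp only [lp.coeFn_single]
  rw [Finset.sum_pi_single]
  simp

theorem limitProfile_apply (h ℓ : ℕ) :
    limitProfile p h ℓ = (if ℓ < h then (h : ℝ)⁻¹ else 0) - if ℓ = 0 then 1 else 0 := by
  rw [show limitProfile p h ℓ
      = (h : ℝ)⁻¹ * rangeIndicator p h ℓ - Pi.single (M := fun _ : ℕ => ℝ) 0 1 ℓ from rfl,
    rangeIndicator_apply, Pi.single_apply]
  simp

variable [Fact (1 ≤ p)]

theorem geomSeq_apply (r : ℝ) (hr : |r| < 1) (ℓ : ℕ) : geomSeq p r hr ℓ = r ^ ℓ := rfl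

theorem smul_rangeIndicator_sub_geomSeq_apply (h : ℕ) (t r : ℝ) (hr : |r| < 1) (ℓ : ℕ) :
    (t • rangeIndicator p h - geomSeq p r hr) ℓ = (if ℓ < h then t else 0) - r ^ ℓ := by
  rw [show (t • rangeIndicator p h - geomSeq p r hr) ℓ = t * rangeIndicator p h ℓ - r ^ ℓ from rfl,
    rangeIndicator_apply]
  split_ifs <;> simp

theorem norm_rangeIndicator_le (h : ℕ) : ‖rangeIndicator p h‖ ≤ h := by
  have hp : 0 < p := zero_lt_one.trans_le Fact.out
  refine (norm_sum_le (Finset.range h) fun i => lp.single p i (1 : ℝ)).trans_eq ?_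
  simp [lp.norm_single hp]

theorem one_le_norm_geomSeq (r : ℝ) (hr : |r| < 1) : 1 ≤ ‖geomSeq p r hr‖ := by
  have hp : p ≠ 0 := (zero_lt_one.trans_le Fact.out).ne'
  simpa [geomSeq_apply] using lp.norm_apply_le_norm hp (geomSeq p r hr) 0

theorem norm_geomSeq_sub_single_le (r : ℝ) (hr : |r| < 1) :
    ‖geomSeq p r hr - lp.single p 0 1‖ ≤ |r| / (1 - |r|) := by
  have hcoord : ∀ ℓ, ‖(geomSeq p r hr - lp.single p 0 1 : ℓ^p(ℕ, ℝ)) ℓ‖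
      = if ℓ = 0 then 0 else |r| ^ ℓ := by
    intro ℓ
    rw [show (geomSeq p r hr - lp.single p 0 1 : ℓ^p(ℕ, ℝ)) ℓ
      = r ^ ℓ - Pi.single (M := fun _ : ℕ => ℝ) 0 1 ℓ from rfl]
    rcases ℓ with _ | ℓ <;> simp
  have hgeom := summable_geometric_of_lt_one (abs_nonneg r) hr
  have hsum : Summable fun ℓ => ‖(geomSeq p r hr - lp.single p 0 1 : ℓ^p(ℕ, ℝ)) ℓ‖ := by
    simp only [hcoord]
    exact hgeom.of_nonneg_of_le (fun ℓ => by positivity) fun ℓ => by split_ifs <;> simp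
  refine (lp.norm_le_tsum_norm _ hsum).trans_eq ?_
  rw [hsum.tsum_eq_zero_add]
  simp only [hcoord, if_pos, Nat.add_one_ne_zero, if_false, pow_succ, tsum_mul_right,
    tsum_geometric_of_lt_one (abs_nonneg r) hr]
  ring

theorem norm_geomSeq_le (r : ℝ) (hr : |r| < 1) : ‖geomSeq p r hr‖ ≤ (1 - |r|)⁻¹ := by
  have hp : 0 < p := zero_lt_one.trans_le Fact.out
  have h1r : 0 < 1 - |r| := sub_pos.2 hr
  calc ‖geomSeq p r hr‖
      ≤ ‖(lp.single p 0 1 : ℓ^p(ℕ, ℝ))‖ + ‖geomSeq p r hr - lp.single p 0 1‖ :=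
        norm_le_insert' _ _
    _ ≤ 1 + |r| / (1 - |r|) := by
        rw [lp.norm_single hp, norm_one]
        gcongr
        exact norm_geomSeq_sub_single_le r hr
    _ = (1 - |r|)⁻¹ := by field_simp; ring

theorem norm_limitProfile_le (h : ℕ) : ‖limitProfile p h‖ ≤ 2 := by
  have hp : 0 < p := zero_lt_one.trans_le Fact.out
  calc ‖limitProfile p h‖
      ≤ ‖(h : ℝ)⁻¹ • rangeIndicator p h‖ + ‖(lp.single p 0 1 : ℓ^p(ℕ, ℝ))‖ := norm_sub_le _ _
    _ ≤ 1 + 1 := by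
        rw [norm_smul, lp.norm_single hp, norm_one, norm_inv, Real.norm_natCast]
        gcongr
        rcases Nat.eq_zero_or_pos h with rfl | hh
        · simp
        · rw [inv_mul_le_one₀ (by positivity)]
          exact norm_rangeIndicator_le h
    _ = 2 := by norm_num

theorem one_half_le_norm_limitProfile {h : ℕ} (hh : 2 ≤ h) : 1 / 2 ≤ ‖limitProfile p h‖ := by
  have hp : p ≠ 0 := (zero_lt_one.trans_le Fact.out).ne'
  have hH : (2 : ℝ) ≤ h := by exact_mod_cast hh
  have h0 := lp.norm_apply_le_norm hp (limitProfile p h) 0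
  rw [limitProfile_apply, if_pos (by omega), if_pos rfl, Real.norm_eq_abs,
    abs_of_nonpos (by linarith [inv_le_one_of_one_le₀ (by linarith : (1 : ℝ) ≤ h)])] at h0
  have : (h : ℝ)⁻¹ ≤ 1 / 2 := by rw [one_div]; exact inv_anti₀ two_pos hH
  linarith

theorem abs_norm_div_norm_geomSeq_sub_norm_limitProfile_le (h : ℕ) (t r : ℝ) (hr : |r| < 1)
    (hr2 : |r| ≤ 1 / 2) :
    |‖t • rangeIndicator p h - geomSeq p r hr‖ / ‖geomSeq p r hr‖ - ‖limitProfile p h‖|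
      ≤ h * |t - (h : ℝ)⁻¹| + 4 * |r| := by
  have h1r : 0 < 1 - |r| := sub_pos.2 hr
  have hdiff : t • rangeIndicator p h - geomSeq p r hr - limitProfile p h
      = (t - (h : ℝ)⁻¹) • rangeIndicator p h - (geomSeq p r hr - lp.single p 0 1) := by
    rw [limitProfile, sub_smul]; abel
  have hdist : ‖t • rangeIndicator p h - geomSeq p r hr - limitProfile p h‖
      ≤ h * |t - (h : ℝ)⁻¹| + 2 * |r| := by
    rw [hdiff]
    refine (norm_sub_le _ _).trans (add_le_add ?_ ?_)
    · rw [norm_smul, Real.norm_eq_abs, mul_comm]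
      exact mul_le_mul_of_nonneg_right (norm_rangeIndicator_le h) (abs_nonneg _)
    · refine (norm_geomSeq_sub_single_le r hr).trans ?_
      rw [div_le_iff₀ h1r]
      nlinarith [abs_nonneg r]
  have hG : 0 < ‖geomSeq p r hr‖ := one_pos.trans_le (one_le_norm_geomSeq r hr)
  have hinv : 1 - ‖geomSeq p r hr‖⁻¹ ≤ |r| := by
    linarith [(le_inv_comm₀ h1r hG).2 (norm_geomSeq_le r hr)]
  have hinv0 : 0 ≤ 1 - ‖geomSeq p r hr‖⁻¹ :=
    sub_nonneg.2 (inv_le_one_of_one_le₀ (one_le_norm_geomSeq r hr))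
  calc _ ≤ ‖t • rangeIndicator p h - geomSeq p r hr - limitProfile p h‖
        + ‖limitProfile p h‖ * (1 - ‖geomSeq p r hr‖⁻¹) :=
        abs_norm_div_norm_sub_norm_le (one_le_norm_geomSeq r hr)
    _ ≤ (h * |t - (h : ℝ)⁻¹| + 2 * |r|) + 2 * |r| := by
        gcongr
        exact norm_limitProfile_le h
    _ = h * |t - (h : ℝ)⁻¹| + 4 * |r| := by ring

end Profiles

theorem norm_limitProfile_ofReal {p : ℝ} (hp : 0 < p) {h : ℕ} (hh : 1 ≤ h) :
    ‖limitProfile (ENNReal.ofReal p) h‖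
      = (|1 - 1 / (h : ℝ)| ^ p + ((h : ℝ) - 1) * (1 / (h : ℝ)) ^ p) ^ (1 / p) := by
  obtain ⟨m, rfl⟩ : ∃ m, h = m + 1 := ⟨h - 1, by omega⟩
  rw [lp.norm_ofReal_eq hp, tsum_eq_sum (s := Finset.range (m + 1)), Finset.sum_range_succ']
  · have hterm : ∀ ℓ ∈ Finset.range m, |limitProfile (ENNReal.ofReal p) (m + 1) (ℓ + 1)| ^ p
        = (1 / ((m + 1 : ℕ) : ℝ)) ^ p := fun ℓ hℓ => by
      rw [limitProfile_apply, if_pos (by simp at hℓ; omega), if_neg (by omega), sub_zero,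
        abs_of_pos (by positivity), one_div]
    rw [Finset.sum_congr rfl hterm, Finset.sum_const, Finset.card_range, nsmul_eq_mul,
      limitProfile_apply, if_pos (by omega), if_pos rfl, abs_sub_comm, one_div, add_comm]
    push_cast
    rw [add_sub_cancel_right]
  · intro ℓ hℓ
    rw [Finset.mem_range, not_lt] at hℓ
    rw [limitProfile_apply, if_neg (by omega), if_neg (by omega), sub_zero, abs_zero,
      Real.zero_rpow hp.ne']

theorem norm_limitProfile_top {h : ℕ} (hh : 2 ≤ h) :
    ‖limitProfile ∞ h‖ = max (1 - 1 / (h : ℝ)) (1 / (h : ℝ)) := by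
  have hH : (2 : ℝ) ≤ h := by exact_mod_cast hh
  have hinv : 1 / (h : ℝ) ≤ 1 / 2 := one_div_le_one_div_of_le two_pos hH
  have h0 : ‖limitProfile ∞ h 0‖ = 1 - 1 / (h : ℝ) := by
    rw [limitProfile_apply, if_pos (by omega), if_pos rfl, Real.norm_eq_abs, abs_sub_comm,
      ← one_div, abs_of_nonneg (by linarith)]
  have h1 : ‖limitProfile ∞ h 1‖ = 1 / (h : ℝ) := by
    rw [limitProfile_apply, if_pos (by omega), if_neg one_ne_zero, sub_zero, Real.norm_eq_abs,
      abs_of_pos (by positivity), one_div]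
  refine le_antisymm (lp.norm_le_of_forall_le (by positivity) fun ℓ => ?_)
    (max_le (h0 ▸ lp.norm_apply_le_norm ENNReal.top_ne_zero _ 0)
      (h1 ▸ lp.norm_apply_le_norm ENNReal.top_ne_zero _ 1))
  rcases ℓ with _ | ℓ
  · exact h0.le.trans (le_max_left _ _)
  · rw [limitProfile_apply, if_neg (Nat.succ_ne_zero ℓ), sub_zero]
    split_ifs
    · rw [Real.norm_eq_abs, abs_of_pos (by positivity), ← one_div]; exact le_max_right _ _
    · rw [norm_zero]; positivity

section StrainError

variable (P : ℝ≥0∞) [Fact (1 ≤ P)] {a b c q lam : ℝ} {h : ℕ}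

theorem scb_sub_atomistic_eq_smul (hD : a + b * (1 + lam) ≠ 0) (hlam : |lam| < 1) (ℓ : ℕ) :
    (if ℓ < h then c / ((h : ℝ) * a + (4 * h - 2) * b) else 0) - c * lam ^ ℓ / (a + b * (1 + lam))
      = c / (a + b * (1 + lam)) * (((a + b * (1 + lam)) / (h * a + (4 * h - 2) * b)) •
          rangeIndicator P h - geomSeq P lam hlam) ℓ := by
  rw [smul_rangeIndicator_sub_geomSeq_apply]
  split_ifs
  · field_simp
  · ring

theorem abs_norm_ratio_sub_norm_limitProfile_le (hh : 1 ≤ h) (ha : 0 < a) (hb : |b| ≤ q * a)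
    (hq : q ≤ 1 / 8) (hlam0 : 0 < lam) (hlam : |lam| < 1)
    (heq : b * lam ^ 2 + (a + 2 * b) * lam + b = 0) :
    |‖((a + b * (1 + lam)) / (h * a + (4 * h - 2) * b)) • rangeIndicator P h
        - geomSeq P lam hlam‖ / ‖geomSeq P lam hlam‖ - ‖limitProfile P h‖| ≤ 22 * q := by
  have hlam1 : lam < 1 := (le_abs_self lam).trans_lt hlam
  have hroot := quadratic_root_le_four_mul ha hb hq hlam0 hlam1 heq
  refine (abs_norm_div_norm_geomSeq_sub_norm_limitProfile_le h _ lam hlam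
    (by rw [abs_of_pos hlam0]; linarith)).trans ?_
  rw [abs_of_pos hlam0]
  linarith [mul_abs_denominator_ratio_sub_inv_le (Nat.one_le_cast.2 hh) ha hb hq hlam0.le hlam1.le]

end StrainError

/-- strain error for integer h₀ ≥ 2: for every p ∈ [1,∞],
Err_p = C_p + O(e^{-α}) with C_p = (|1-1/h₀|^p + (h₀-1)(1/h₀)^p)^{1/p}
(C_∞ = max(1-1/h₀, 1/h₀)), and 1/2 ≤ C_p ≤ 2. -/
theorem stmt_15 (φ₀ : ℝ) (h₀ : ℕ) (hh : 2 ≤ h₀) (p : ℝ) (hp : 1 ≤ p) :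
    (1 / 2 : ℝ) ≤ (|1 - 1 / (h₀ : ℝ)| ^ p + ((h₀ : ℝ) - 1) * (1 / (h₀ : ℝ)) ^ p) ^ (1 / p) ∧
    (|1 - 1 / (h₀ : ℝ)| ^ p + ((h₀ : ℝ) - 1) * (1 / (h₀ : ℝ)) ^ p) ^ (1 / p) ≤ 2 ∧
    (1 / 2 : ℝ) ≤ max (1 - 1 / (h₀ : ℝ)) (1 / (h₀ : ℝ)) ∧
    max (1 - 1 / (h₀ : ℝ)) (1 / (h₀ : ℝ)) ≤ 2 ∧
    ∃ C α₀ : ℝ, 0 < C ∧ 0 < α₀ ∧ ∀ α : ℝ, α₀ ≤ α →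
      ∀ lam : ℝ, lam ∈ Set.Ioo (0 : ℝ) 1 →
        (let a : ℝ := deriv (deriv (morse α φ₀)) 1
         let b : ℝ := deriv (deriv (morse α φ₀)) 2
         let c : ℝ := deriv (morse α φ₀) 2
         b * lam ^ 2 + (a + 2 * b) * lam + b = 0 →
         (let ua : ℕ → ℝ := fun ℓ => c * lam ^ ℓ / (a + b * (1 + lam))
          let uscb : ℕ → ℝ := fun ℓ =>
            if ℓ < h₀ then c / ((h₀ : ℝ) * a + (4 * (h₀ : ℝ) - 2) * b) else 0
          abs ((∑' ℓ : ℕ, |uscb ℓ - ua ℓ| ^ p) ^ (1 / p) / (∑' ℓ : ℕ, |ua ℓ| ^ p) ^ (1 / p)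
              - (|1 - 1 / (h₀ : ℝ)| ^ p + ((h₀ : ℝ) - 1) * (1 / (h₀ : ℝ)) ^ p) ^ (1 / p))
            ≤ C * Real.exp (-α) ∧
          abs ((⨆ ℓ : ℕ, |uscb ℓ - ua ℓ|) / (⨆ ℓ : ℕ, |ua ℓ|)
              - max (1 - 1 / (h₀ : ℝ)) (1 / (h₀ : ℝ))) ≤ C * Real.exp (-α))) := by
  have : Fact (1 ≤ ENNReal.ofReal p) := ⟨ENNReal.one_le_ofReal.2 hp⟩
  have hp0 : 0 < p := one_pos.trans_le hp
  have hCp := norm_limitProfile_ofReal hp0 (h := h₀) (by omega)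
  have hCtop := norm_limitProfile_top hh
  refine ⟨hCp ▸ one_half_le_norm_limitProfile hh, hCp ▸ norm_limitProfile_le h₀,
    hCtop ▸ one_half_le_norm_limitProfile hh, hCtop ▸ norm_limitProfile_le h₀,
    22, 7, by norm_num, by norm_num, ?_⟩
  intro α hα lam ⟨hlam0, hlam1⟩ a b c heq
  dsimp only
  have hq : exp (-α) ≤ 1 / 8 := by
    rw [exp_neg, one_div]
    exact inv_anti₀ (by norm_num) (by linarith [add_one_le_exp α])
  obtain ⟨ha, hc, hb⟩ : 0 < a ∧ 0 < c ∧ |b| ≤ exp (-α) * a :=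
    morse_coeff_bounds α φ₀ (by linarith)
  have hD : 0 < a + b * (1 + lam) := atomistic_denominator_pos ha hb hq hlam0.le hlam1.le
  have hK : |c / (a + b * (1 + lam))| ≠ 0 := abs_ne_zero.2 (div_pos hc hD).ne'
  have hlam : |lam| < 1 := by rwa [abs_of_pos hlam0]
  have hua (P : ℝ≥0∞) [Fact (1 ≤ P)] (ℓ : ℕ) :
      c * lam ^ ℓ / (a + b * (1 + lam)) = c / (a + b * (1 + lam)) * geomSeq P lam hlam ℓ :=
    mul_div_right_comm _ _ _
  have herr (P : ℝ≥0∞) [Fact (1 ≤ P)] :=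
    abs_norm_ratio_sub_norm_limitProfile_le P (by omega : 1 ≤ h₀) ha hb hq hlam0 hlam heq
  constructor
  · rw [rpow_tsum_abs_rpow_eq_abs_mul_norm hp0 _ _ (scb_sub_atomistic_eq_smul _ hD.ne' hlam),
      rpow_tsum_abs_rpow_eq_abs_mul_norm hp0 _ _ (hua _), mul_div_mul_left _ _ hK, ← hCp]
    exact herr _
  · rw [iSup_abs_eq_abs_mul_norm _ _ (scb_sub_atomistic_eq_smul _ hD.ne' hlam),
      iSup_abs_eq_abs_mul_norm _ _ (hua ∞), mul_div_mul_left _ _ hK, ← hCtop]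
    exact herr ∞
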